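/- Value table for the Petersson cocycle: ω(g,h) = 1 if sign(c_g(−d_g)) = sign(c_h(−d_h)) = 1 and sign(c_{gh}(−d_{gh})) = −1; ω(g,h) = −1 if sign(c_g(−d_g)) = sign(c_h(−d_h)) = −1 and sign(c_{gh}(−d_{gh})) = 1; and ω(g,h) = 0 in all other cases. -/

import Mathlib

open Matrix UpperHalfPlane Complex

abbrev SL2R := Matrix.SpecialLinearGroup (Fin 2) ℝ

/-- The automorphy factor `j(g,z) = cz + d`. -/
noncomputable def jFac (g : SL2R) (z : ℂ) : ℂ :=
  (g.1 1 0 : ℝ) * z + (g.1 1 1 : ℝ)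

/-- Petersson's 2-cocycle
`ω(g,h) = (1/(2πi))(Log j(g, h·z) + Log j(h,z) − Log j(gh,z))`. -/
noncomputable def omegaC (g h : SL2R) (z : ℍ) : ℂ :=
  (1 / (2 * Real.pi * Complex.I)) *
    (Complex.log (jFac g ((h • z : ℍ) : ℂ)) + Complex.log (jFac h (z : ℂ))
      - Complex.log (jFac (g * h) (z : ℂ)))

/-- `c(−d)`: equal to `c` if `c ≠ 0` and to `−d` if `c = 0`, for the bottom row `(c,d)`. -/
noncomputable def cStar (g : SL2R) : ℝ :=
  if g.1 1 0 ≠ 0 then g.1 1 0 else -g.1 1 1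

/-! Since `j(gh, z) = j(g, h·z) j(h, z)`, the real parts of the three logarithms in `ω(g,h)` cancel
and `2π ω(g,h) = arg a + arg b - arg (ab)` for `a = j(g, h·z)`, `b = j(h, z)`. This is a multiple
of `2π` lying in `(-3π, 3π)`, and which multiple it is depends only on whether each of the three
principal arguments lies in `(0, π]` or in `(-π, 0]`. As `Im j(g, w) = c · Im w`, and `j(g, w) = d`
when `c = 0`, the argument `arg j(g, w)` is positive exactly when `c(-d)` is. -/

open Real

namespace Complex

theorem arg_pos_iff {z : ℂ} : 0 < arg z ↔ 0 < z.im ∨ z.im = 0 ∧ z.re < 0 := by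
  rw [lt_iff_le_and_ne, ne_comm, arg_nonneg_iff, Ne, arg_eq_zero_iff]
  rcases lt_trichotomy z.im 0 with h | h | h
  · simp [h.not_ge, h.ne, h.not_gt]
  · simp [h]
  · simp [h, h.le, h.ne']

theorem log_add_log_sub_log_mul {a b : ℂ} (ha : a ≠ 0) (hb : b ≠ 0) :
    log a + log b - log (a * b) = (arg a + arg b - arg (a * b) : ℝ) * I := by
  apply Complex.ext <;>
    simp [log_re, log_im, Real.log_mul (norm_ne_zero_iff.mpr ha) (norm_ne_zero_iff.mpr hb)]

theorem arg_add_arg_sub_arg_mul_cases {a b : ℂ} (ha : a ≠ 0) (hb : b ≠ 0) :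
    (0 < arg a ∧ 0 < arg b ∧ arg (a * b) ≤ 0 → arg a + arg b - arg (a * b) = 2 * π) ∧
    (arg a ≤ 0 ∧ arg b ≤ 0 ∧ 0 < arg (a * b) → arg a + arg b - arg (a * b) = -(2 * π)) ∧
    (¬ (0 < arg a ∧ 0 < arg b ∧ arg (a * b) ≤ 0) ∧ ¬ (arg a ≤ 0 ∧ arg b ≤ 0 ∧ 0 < arg (a * b)) →
      arg a + arg b - arg (a * b) = 0) := by
  obtain ⟨k, hk⟩ : ∃ k : ℤ, arg a + arg b - arg (a * b) = k * (2 * π) := by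
    have h := arg_mul_coe_angle ha hb
    rw [← Real.Angle.coe_add, eq_comm, Real.Angle.angle_eq_iff_two_pi_dvd_sub] at h
    obtain ⟨k, hk⟩ := h
    exact ⟨k, by rw [hk]; ring⟩
  have := neg_pi_lt_arg a
  have := neg_pi_lt_arg b
  have := neg_pi_lt_arg (a * b)
  have := arg_le_pi a
  have := arg_le_pi b
  have := arg_le_pi (a * b)
  obtain rfl | rfl | rfl : k = 1 ∨ k = -1 ∨ k = 0 := by
    have : k < 2 := by exact_mod_cast (show (k : ℝ) < 2 by nlinarith [pi_pos])
    have : -2 < k := by exact_mod_cast (show (-2 : ℝ) < k by nlinarith [pi_pos])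
    omega
  all_goals push_cast at hk; grind [pi_pos]

end Complex

theorem Real.sign_eq_one_iff {r : ℝ} : Real.sign r = 1 ↔ 0 < r := by
  rcases lt_trichotomy r 0 with h | rfl | h
  · norm_num [Real.sign_of_neg h, h.asymm]
  · simp
  · simp [Real.sign_of_pos h, h]

theorem Real.sign_eq_neg_one_iff {r : ℝ} : Real.sign r = -1 ↔ r < 0 := by
  rcases lt_trichotomy r 0 with h | rfl | h
  · simp [Real.sign_of_neg h, h]
  · simp
  · norm_num [Real.sign_of_pos h, h.asymm]

theorem jFac_eq_denom (g : SL2R) (z : ℂ) : jFac g z = denom (SpecialLinearGroup.mapGL ℝ g) z := by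
  simp [jFac, denom]

theorem jFac_ne_zero (g : SL2R) (w : ℍ) : jFac g w ≠ 0 := by
  rw [jFac_eq_denom]
  exact denom_ne_zero _ w

theorem jFac_mul (g h : SL2R) (z : ℍ) : jFac (g * h) z = jFac g ↑(h • z) * jFac h z := by
  simpa [jFac_eq_denom, coe_specialLinearGroup_apply, num, denom] using
    denom_cocycle (SpecialLinearGroup.mapGL ℝ g) (SpecialLinearGroup.mapGL ℝ h) z.im_ne_zero

theorem cStar_ne_zero (g : SL2R) : cStar g ≠ 0 := by
  unfold cStar
  split_ifs with hc
  · exact hc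
  · have hdet := g.det_coe
    rw [det_fin_two, not_not.mp hc] at hdet
    intro hd
    simp_all

theorem arg_jFac_pos_iff (g : SL2R) (w : ℍ) : 0 < arg (jFac g w) ↔ 0 < cStar g := by
  have him : (jFac g w).im = g 1 0 * w.im := by simp [jFac]
  have hre : (jFac g w).re = g 1 0 * w.re + g 1 1 := by simp [jFac]
  rw [Complex.arg_pos_iff, him, hre, cStar]
  split_ifs with hc
  · simp [hc, w.im_ne_zero, mul_pos_iff_of_pos_right w.im_pos]
  · simp [not_not.mp hc]

theorem sign_cStar_eq_one_iff (g : SL2R) (w : ℍ) :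
    Real.sign (cStar g) = 1 ↔ 0 < arg (jFac g w) := by
  rw [Real.sign_eq_one_iff, arg_jFac_pos_iff]

theorem sign_cStar_eq_neg_one_iff (g : SL2R) (w : ℍ) :
    Real.sign (cStar g) = -1 ↔ arg (jFac g w) ≤ 0 := by
  rw [Real.sign_eq_neg_one_iff, ← not_lt, arg_jFac_pos_iff, not_lt,
    (cStar_ne_zero g).le_iff_lt]

theorem omegaC_eq_arg (g h : SL2R) (z : ℍ) :
    omegaC g h z = ((arg (jFac g ↑(h • z)) + arg (jFac h z)
      - arg (jFac g ↑(h • z) * jFac h z)) / (2 * π) : ℝ) := by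
  rw [omegaC, jFac_mul, Complex.log_add_log_sub_log_mul (jFac_ne_zero _ _) (jFac_ne_zero _ _)]
  push_cast
  field_simp [ofReal_ne_zero.mpr pi_ne_zero, I_ne_zero]

/-- Value table for the Petersson cocycle. -/
theorem omegaC_values (g h : SL2R) (z : ℍ) :
    (Real.sign (cStar g) = 1 ∧ Real.sign (cStar h) = 1 ∧ Real.sign (cStar (g * h)) = -1
        → omegaC g h z = 1) ∧
    (Real.sign (cStar g) = -1 ∧ Real.sign (cStar h) = -1 ∧ Real.sign (cStar (g * h)) = 1
        → omegaC g h z = -1) ∧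
    (¬ (Real.sign (cStar g) = 1 ∧ Real.sign (cStar h) = 1 ∧ Real.sign (cStar (g * h)) = -1) ∧
     ¬ (Real.sign (cStar g) = -1 ∧ Real.sign (cStar h) = -1 ∧ Real.sign (cStar (g * h)) = 1)
        → omegaC g h z = 0) := by
  rw [sign_cStar_eq_one_iff g (h • z), sign_cStar_eq_neg_one_iff g (h • z),
    sign_cStar_eq_one_iff h z, sign_cStar_eq_neg_one_iff h z,
    sign_cStar_eq_one_iff (g * h) z, sign_cStar_eq_neg_one_iff (g * h) z, jFac_mul,
    omegaC_eq_arg]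
  obtain ⟨h_one, h_neg_one, h_zero⟩ :=
    Complex.arg_add_arg_sub_arg_mul_cases (jFac_ne_zero g (h • z)) (jFac_ne_zero h z)
  exact ⟨fun H ↦ by simp [h_one H, pi_ne_zero], fun H ↦ by simp [h_neg_one H, pi_ne_zero],
    fun H ↦ by simp [h_zero H]⟩
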